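/- arXiv:1608.03115 — 2 statements merged into one kernel-verified Lean document; each statement's English description precedes it below -/
import Mathlib

section
/- Suppose (P) is continuous, x̂ ∈ S is an isolated efficient solution of (P), every constraint function g_t is continuously differentiable on a neighborhood of x̂, and the Mangasarian–Fromovitz constraint qualification (MFCQ) holds at x̂. Then the perturbed KKT condition holds at x̂. -/
/-! The set `C` of KKT vectors `∑ αᵢ ∂fᵢ(x̂) + ∑ βₜ ∂gₜ(x̂)` is convex, so in finite dimension it
contains the open ball of radius `ν` once `sup_{c ∈ C} ⟪d, c⟫ ≥ ν‖d‖` for every `d`. If instead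
`⟪d, c⟫ ≤ r < ν‖d‖` on `C`, then `d` is nonpositive on the active gradients, and nudging `d`
towards an MFCQ direction gives a direction `u` along which `x̂ + τu` stays feasible for all small
`τ > 0` (compactness of `T` makes this uniform in `t`). Isolated efficiency then gives an index `i`
with `fᵢ'(x̂; u) ≥ ν‖u‖`, and the max formula (Hahn–Banach applied to the sublinear function
`fᵢ'(x̂; ·)`) turns this into a subgradient `ξ ∈ ∂fᵢ(x̂)` with `⟪ξ, u⟫ ≥ ν‖u‖`, contradicting the
bound on `C`. -/

open Set Filter Topology
open scoped RealInnerProductSpace Pointwise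

noncomputable section

namespace MOSIP

variable {n : ℕ} {T : Type*} {p : ℕ}

/-- The decision space `ℝ^n`. -/
abbrev Eucl (n : ℕ) := EuclideanSpace ℝ (Fin n)

/-- Subdifferential of a real-valued function. -/
def subdiff (h : Eucl n → ℝ) (x : Eucl n) : Set (Eucl n) :=
  {ξ | ∀ y, h x + ⟪ξ, y - x⟫ ≤ h y}

/-- Subdifferential of an extended-real-valued function. -/
def subdiffE (h : Eucl n → EReal) (x : Eucl n) : Set (Eucl n) :=
  {ξ | ∀ y, h x + ((⟪ξ, y - x⟫ : ℝ) : EReal) ≤ h y}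

/-- Convexity of an extended-real-valued function. -/
def ConvexE (h : Eucl n → EReal) : Prop :=
  ∀ x y : Eucl n, ∀ a b : ℝ, 0 ≤ a → 0 ≤ b → a + b = 1 →
    h (a • x + b • y) ≤ (a : EReal) * h x + (b : EReal) * h y

/-- Proper (with values in `ℝ ∪ {+∞}`): never `−∞` and not identically `+∞`. -/
def ProperE (h : Eucl n → EReal) : Prop :=
  (∀ x, h x ≠ ⊥) ∧ (∃ x, h x ≠ ⊤)

/-- Feasible set `S` of the problem `(P)`. -/
def feasSet (g : T → Eucl n → EReal) : Set (Eucl n) := {x | ∀ t, g t x ≤ 0}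

/-- Active indices `T(x)`. -/
def activeIx (g : T → Eucl n → EReal) (x : Eucl n) : Set T := {t | g t x = 0}

/-- `ε`-active indices `T_ε(x)`. -/
def activeIxEps (g : T → Eucl n → EReal) (x : Eucl n) (ε : ℝ) : Set T :=
  {t | ((-ε : ℝ) : EReal) ≤ g t x}

/-- `F(xh) = ⋃ i, ∂f_i(xh)`. -/
def FSet (f : Fin p → Eucl n → ℝ) (x : Eucl n) : Set (Eucl n) := ⋃ i, subdiff (f i) x

/-- `G(xh) = ⋃_{t ∈ T(xh)} ∂g_t(xh)`. -/
def GSet (g : T → Eucl n → EReal) (x : Eucl n) : Set (Eucl n) :=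
  ⋃ t ∈ activeIx g x, subdiffE (g t) x

/-- The smallest convex cone containing `M` and `0`: all finite nonnegative combinations. -/
def coneHull (M : Set (Eucl n)) : Set (Eucl n) :=
  {x | ∃ (s : Finset (Eucl n)) (c : Eucl n → ℝ), ↑s ⊆ M ∧ (∀ v ∈ s, 0 ≤ c v) ∧
    x = ∑ v ∈ s, c v • v}

/-- Negative polar cone `M⁰`. -/
def negPolar (M : Set (Eucl n)) : Set (Eucl n) := {d | ∀ ξ ∈ M, ⟪ξ, d⟫ ≤ 0}

/-- Strictly negative polar cone `M⁻`. -/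
def strictNegPolar (M : Set (Eucl n)) : Set (Eucl n) := {d | ∀ ξ ∈ M, ⟪ξ, d⟫ < 0}

/-- Contingent (Bouligand tangent) cone of `M` at `x`. -/
def contingentCone (M : Set (Eucl n)) (x : Eucl n) : Set (Eucl n) :=
  {v | ∃ (τ : ℕ → ℝ) (w : ℕ → Eucl n), (∀ r, 0 < τ r) ∧ Tendsto τ atTop (𝓝 0) ∧
    Tendsto w atTop (𝓝 v) ∧ ∀ r, x + τ r • w r ∈ M}

/-- Normal cone `N(M, x) := C(M, x)⁰`. -/
def normalCone (M : Set (Eucl n)) (x : Eucl n) : Set (Eucl n) :=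
  negPolar (contingentCone M x)

/-- Weak efficient solution. -/
def WeakEff (f : Fin p → Eucl n → ℝ) (S : Set (Eucl n)) (xh : Eucl n) : Prop :=
  ¬ ∃ x ∈ S, ∀ i, f i x < f i xh

/-- Efficient solution. -/
def Eff (f : Fin p → Eucl n → ℝ) (S : Set (Eucl n)) (xh : Eucl n) : Prop :=
  ¬ ∃ x ∈ S, (∀ i, f i x ≤ f i xh) ∧ ∃ j, f j x < f j xh

/-- Isolated efficient solution with constant `ν`:
`max_i (f_i(x) − f_i(xh)) ≥ ν‖x − xh‖` on `S`. -/
def IsolatedEff (f : Fin p → Eucl n → ℝ) (S : Set (Eucl n)) (xh : Eucl n) (ν : ℝ) : Prop :=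
  ∀ x ∈ S, ∃ i, ν * ‖x - xh‖ ≤ f i x - f i xh

/-- `w ∈ Σ α_i ∂f_i(xh) + Σ_{t ∈ T*} β_t ∂g_t(xh)` with multipliers as described,
where `Nonneg`/`Pos` refers to the sign condition on the `α_i`. -/
def KKTPoint (f : Fin p → Eucl n → ℝ) (g : T → Eucl n → EReal) (xh : Eucl n)
    (w : Eucl n) : Prop :=
  ∃ (α : Fin p → ℝ) (Ts : Finset T) (β : T → ℝ) (ξ : Fin p → Eucl n) (ζ : T → Eucl n),
    (∀ i, 0 ≤ α i) ∧ ∑ i, α i = 1 ∧ (∀ t ∈ Ts, t ∈ activeIx g xh) ∧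
    (∀ t ∈ Ts, 0 ≤ β t) ∧ (∀ i, ξ i ∈ subdiff (f i) xh) ∧
    (∀ t ∈ Ts, ζ t ∈ subdiffE (g t) xh) ∧
    ∑ i, α i • ξ i + ∑ t ∈ Ts, β t • ζ t = w

/-- The weak KKT condition at `xh`. -/
def WeakKKT (f : Fin p → Eucl n → ℝ) (g : T → Eucl n → EReal) (xh : Eucl n) : Prop :=
  KKTPoint f g xh 0

/-- The strong KKT condition at `xh` (all objective multipliers positive). -/
def StrongKKT (f : Fin p → Eucl n → ℝ) (g : T → Eucl n → EReal) (xh : Eucl n) : Prop :=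
  ∃ (α : Fin p → ℝ) (Ts : Finset T) (β : T → ℝ) (ξ : Fin p → Eucl n) (ζ : T → Eucl n),
    (∀ i, 0 < α i) ∧ ∑ i, α i = 1 ∧ (∀ t ∈ Ts, t ∈ activeIx g xh) ∧
    (∀ t ∈ Ts, 0 ≤ β t) ∧ (∀ i, ξ i ∈ subdiff (f i) xh) ∧
    (∀ t ∈ Ts, ζ t ∈ subdiffE (g t) xh) ∧
    ∑ i, α i • ξ i + ∑ t ∈ Ts, β t • ζ t = 0

/-- The perturbed KKT condition at `xh` with constant `ν`. -/
def PerturbedKKT (f : Fin p → Eucl n → ℝ) (g : T → Eucl n → EReal) (xh : Eucl n)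
    (ν : ℝ) : Prop :=
  ∀ w : Eucl n, ‖w‖ ≤ ν → KKTPoint f g xh w

/-- The gap function `ϑ(x, ξ, λ) = sup_{y ∈ S} Σ_i λ_i ⟪ξ_i, x − y⟫`. -/
def gapFn (S : Set (Eucl n)) (x : Eucl n) (ξ : Fin p → Eucl n) (lam : Fin p → ℝ) : EReal :=
  ⨆ y ∈ S, ((∑ i, lam i * ⟪ξ i, x - y⟫ : ℝ) : EReal)

/-- The unit simplex of multipliers. -/
def simplex (lam : Fin p → ℝ) : Prop := (∀ i, 0 ≤ lam i) ∧ ∑ i, lam i = 1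

/-- Supremum (marginal) function `ψ(x) = sup_t g_t(x)`. -/
def supFn (g : T → Eucl n → EReal) (x : Eucl n) : EReal := ⨆ t, g t x

/-- Directional derivative of a convex extended-real-valued function,
`h'(x; d) = inf_{τ > 0} (h(x + τ d) − h(x))/τ` (the limit as `τ ↓ 0`). -/
def dirDeriv (h : Eucl n → EReal) (x d : Eucl n) : EReal :=
  ⨅ τ ∈ Ioi (0 : ℝ), (h (x + τ • d) - h x) * ((τ⁻¹ : ℝ) : EReal)

/-- Every constraint is (real-valued and) continuously differentiable around `xh`,
with gradient `gr t` at `xh`. -/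
def SmoothConstraintsAt (g : T → Eucl n → EReal) (gr : T → Eucl n) (xh : Eucl n) : Prop :=
  ∀ t, ∃ (h : Eucl n → ℝ) (U : Set (Eucl n)), U ∈ 𝓝 xh ∧ (∀ y ∈ U, g t y = (h y : EReal)) ∧
    ContDiffOn ℝ 1 h U ∧ gradient h xh = gr t

/-- Slater CQ. -/
def SCQ (g : T → Eucl n → EReal) : Prop := ∃ x₀ : Eucl n, ∀ t, g t x₀ < 0

/-- Mangasarian–Fromovitz CQ at `xh`. -/
def MFCQ (g : T → Eucl n → EReal) (xh : Eucl n) : Prop :=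
  (GSet g xh).Nonempty ∧ (strictNegPolar (GSet g xh)).Nonempty

/-- Perturbed Mangasarian–Fromovitz CQ at `xh`. -/
def PMFCQ (g : T → Eucl n → EReal) (xh : Eucl n) : Prop :=
  ∃ xs : Eucl n,
    (⨅ ε ∈ Ioi (0 : ℝ), ⨆ ξ ∈ ⋃ t ∈ activeIxEps g xh ε, subdiffE (g t) xh,
      ((⟪ξ, xs⟫ : ℝ) : EReal)) < 0

/-- Local Farkas–Minkowski CQ at `xh`. -/
def LFMCQ (g : T → Eucl n → EReal) (xh : Eucl n) : Prop :=
  normalCone (feasSet g) xh = coneHull (GSet g xh)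

/-- Closed cone CQ at `xh`. -/
def CCCQ (g : T → Eucl n → EReal) (xh : Eucl n) : Prop :=
  IsClosed (coneHull (GSet g xh))

/-- Abadie CQ at `xh`. -/
def ACQ (g : T → Eucl n → EReal) (xh : Eucl n) : Prop :=
  (GSet g xh).Nonempty ∧ negPolar (GSet g xh) ⊆ contingentCone (feasSet g) xh

/-- Kuhn–Tucker CQ at `xh`. -/
def KTCQ (g : T → Eucl n → EReal) (xh : Eucl n) : Prop :=
  {d | dirDeriv (supFn g) xh d ≤ 0} ⊆ contingentCone (feasSet g) xh

/-- Pshenichnyi–Levin–Valadier CQ at `xh`. -/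
def PLVCQ (g : T → Eucl n → EReal) (xh : Eucl n) : Prop :=
  subdiffE (supFn g) xh ⊆ coneHull (GSet g xh)

/-- Weak Abadie DQ at `xh`. -/
def WADQ (f : Fin p → Eucl n → ℝ) (g : T → Eucl n → EReal) (xh : Eucl n) : Prop :=
  (GSet g xh).Nonempty ∧
    strictNegPolar (FSet f xh) ∩ negPolar (GSet g xh) ⊆ contingentCone (feasSet g) xh

/-- The sublevel sets `Q^i(xh)`. -/
def QSet (f : Fin p → Eucl n → ℝ) (S : Set (Eucl n)) (xh : Eucl n) (i : Fin p) :
    Set (Eucl n) :=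
  {x ∈ S | ∀ l, l ≠ i → f l x ≤ f l xh}

/-- Extended Abadie DQ at `xh`. -/
def EADQ (f : Fin p → Eucl n → ℝ) (g : T → Eucl n → EReal) (xh : Eucl n) : Prop :=
  (GSet g xh).Nonempty ∧
    negPolar (FSet f xh) ∩ negPolar (GSet g xh) ⊆
      ⋂ i, contingentCone (QSet f (feasSet g) xh i) xh

/-- Maeda objective qualification at `xh`. -/
def MOQ (f : Fin p → Eucl n → ℝ) (xh : Eucl n) : Prop :=
  negPolar (FSet f xh) ⊆ {0} ∪ ⋃ i, strictNegPolar (subdiff (f i) xh)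

section RightDirDeriv

variable {E : Type*} [AddCommGroup E] [Module ℝ E] {f : E → ℝ}

def rightDirDeriv (f : E → ℝ) (x u : E) : ℝ :=
  derivWithin (fun τ : ℝ => f (x + τ • u)) (Ioi 0) 0

theorem _root_.ConvexOn.comp_ray (hf : ConvexOn ℝ univ f) (x u : E) :
    ConvexOn ℝ univ fun τ : ℝ => f (x + τ • u) := by
  simpa [Function.comp_def, AffineMap.lineMap_apply, add_comm] using
    hf.comp_affineMap (AffineMap.lineMap x (x + u))

theorem _root_.ConvexOn.hasDerivWithinAt_rightDirDeriv (hf : ConvexOn ℝ univ f) (x u : E) :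
    HasDerivWithinAt (fun τ : ℝ => f (x + τ • u)) (rightDirDeriv f x u) (Ioi 0) 0 :=
  (hf.comp_ray x u).hasDerivWithinAt_rightDeriv_of_mem_interior (by simp)

theorem _root_.ConvexOn.tendsto_slope_rightDirDeriv (hf : ConvexOn ℝ univ f) (x u : E) :
    Tendsto (fun τ : ℝ => (f (x + τ • u) - f x) / τ) (𝓝[>] 0) (𝓝 (rightDirDeriv f x u)) := by
  refine ((hasDerivWithinAt_iff_tendsto_slope' self_notMem_Ioi).1
    (hf.hasDerivWithinAt_rightDirDeriv x u)).congr fun τ => ?_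
  simp [slope_def_field]

theorem _root_.ConvexOn.rightDirDeriv_le_sub (hf : ConvexOn ℝ univ f) (x u : E) :
    rightDirDeriv f x u ≤ f (x + u) - f x := by
  simpa [slope_def_field] using
    (hf.comp_ray x u).le_slope_of_hasDerivWithinAt_Ioi trivial trivial one_pos
      (hf.hasDerivWithinAt_rightDirDeriv x u)

theorem rightDirDeriv_zero (f : E → ℝ) (x : E) : rightDirDeriv f x 0 = 0 := by
  simp [rightDirDeriv]

theorem _root_.ConvexOn.rightDirDeriv_smul (hf : ConvexOn ℝ univ f) (x u : E) {c : ℝ} (hc : 0 < c) :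
    rightDirDeriv f x (c • u) = c * rightDirDeriv f x u := by
  have hscale : HasDerivWithinAt (fun τ : ℝ => τ * c) c (Ioi 0) 0 := by
    simpa using ((hasDerivAt_id (0 : ℝ)).mul_const c).hasDerivWithinAt
  have hcomp := (hf.hasDerivWithinAt_rightDirDeriv x u).comp_of_eq (0 : ℝ) hscale
    (fun τ (hτ : 0 < τ) => mul_pos hτ hc) (zero_mul c).symm
  rw [mul_comm c]
  refine (hcomp.congr (fun τ _ => ?_) ?_).derivWithin (uniqueDiffWithinAt_Ioi 0)
  all_goals simp [mul_smul]

theorem _root_.ConvexOn.rightDirDeriv_add_le (hf : ConvexOn ℝ univ f) (x u v : E) :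
    rightDirDeriv f x (u + v) ≤ rightDirDeriv f x u + rightDirDeriv f x v := by
  have hmid : ∀ τ > 0, (f (x + τ • (u + v)) - f x) / τ ≤
      ((f (x + τ • (2 : ℝ) • u) - f x) / τ + (f (x + τ • (2 : ℝ) • v) - f x) / τ) / 2 := by
    intro τ hτ
    have h := hf.2 trivial trivial (by norm_num : (0 : ℝ) ≤ 1 / 2) (by norm_num : (0 : ℝ) ≤ 1 / 2)
      (by norm_num) (x := x + τ • (2 : ℝ) • u) (y := x + τ • (2 : ℝ) • v)
    have hx : (1 / 2 : ℝ) • (x + τ • (2 : ℝ) • u) + (1 / 2 : ℝ) • (x + τ • (2 : ℝ) • v) =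
        x + τ • (u + v) := by module
    rw [hx, smul_eq_mul, smul_eq_mul] at h
    rw [← add_div, div_div, div_le_div_iff₀ hτ (by positivity)]
    nlinarith
  have hlim := le_of_tendsto_of_tendsto (hf.tendsto_slope_rightDirDeriv x (u + v))
    (((hf.tendsto_slope_rightDirDeriv x ((2 : ℝ) • u)).add
      (hf.tendsto_slope_rightDirDeriv x ((2 : ℝ) • v))).div_const 2)
    (eventually_nhdsWithin_of_forall hmid)
  rw [hf.rightDirDeriv_smul x u two_pos, hf.rightDirDeriv_smul x v two_pos] at hlim
  linarith

theorem _root_.ConvexOn.mul_rightDirDeriv_le (hf : ConvexOn ℝ univ f) (x u : E) (c : ℝ) :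
    c * rightDirDeriv f x u ≤ rightDirDeriv f x (c • u) := by
  rcases lt_trichotomy c 0 with hc | rfl | hc
  · have h := hf.rightDirDeriv_add_le x (c • u) ((-c) • u)
    rw [← add_smul, add_neg_cancel, zero_smul, rightDirDeriv_zero,
      hf.rightDirDeriv_smul x u (neg_pos.2 hc)] at h
    linarith
  · simp [rightDirDeriv_zero]
  · rw [hf.rightDirDeriv_smul x u hc]

theorem _root_.ConvexOn.exists_linearMap_le_rightDirDeriv (hf : ConvexOn ℝ univ f) (x u : E) :
    ∃ G : E →ₗ[ℝ] ℝ, G u = rightDirDeriv f x u ∧ ∀ v, G v ≤ rightDirDeriv f x v := by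
  have hker : ∀ c : ℝ, c • u = 0 → c • rightDirDeriv f x u = 0 := by
    intro c hc
    rcases smul_eq_zero.1 hc with rfl | rfl
    · exact zero_smul ℝ _
    · rw [rightDirDeriv_zero, smul_zero]
  obtain ⟨G, hGu, hGle⟩ := exists_extension_of_le_sublinear
    (LinearPMap.mkSpanSingleton' u (rightDirDeriv f x u) hker) (rightDirDeriv f x)
    (fun c hc v => hf.rightDirDeriv_smul x v hc) (hf.rightDirDeriv_add_le x) (by
      rintro ⟨_, hz⟩
      obtain ⟨c, rfl⟩ := Submodule.mem_span_singleton.1 hz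
      rw [LinearPMap.mkSpanSingleton'_apply, smul_eq_mul]
      exact hf.mul_rightDirDeriv_le x u c)
  exact ⟨G, (hGu ⟨u, Submodule.mem_span_singleton_self u⟩).trans
    (LinearPMap.mkSpanSingleton'_apply_self _ _ _ _), hGle⟩

end RightDirDeriv

section BallSubset

variable {E : Type*} [NormedAddCommGroup E]

theorem _root_.Convex.interior_closure_eq_interior [NormedSpace ℝ E] [FiniteDimensional ℝ E]
    {s : Set E} (hs : Convex ℝ s) : interior (closure s) = interior s := by
  rcases (interior (closure s)).eq_empty_or_nonempty with h | h
  · rw [h, eq_comm, ← subset_empty_iff, ← h]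
    exact interior_mono subset_closure
  refine hs.interior_closure_eq_interior_of_nonempty_interior
    (hs.interior_nonempty_iff_affineSpan_eq_top.2 (top_unique ?_))
  rw [← isOpen_interior.affineSpan_eq_top h]
  exact affineSpan_le.2 (interior_subset.trans
    (closure_minimal (subset_affineSpan ℝ s) (affineSpan ℝ s).closed_of_finiteDimensional))

theorem _root_.Convex.ball_subset_of_forall_exists_inner_gt [InnerProductSpace ℝ E]
    [FiniteDimensional ℝ E] {K : Set E} (hK : Convex ℝ K) {ν : ℝ}
    (h : ∀ d : E, ∀ r < ν * ‖d‖, ∃ c ∈ K, r < ⟪d, c⟫) : Metric.ball 0 ν ⊆ K := by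
  have hcl : Metric.ball 0 ν ⊆ closure K := by
    intro w hw
    by_contra hwK
    obtain ⟨φ, r, hφK, hφw⟩ := geometric_hahn_banach_closed_point hK.closure isClosed_closure hwK
    set d := (InnerProductSpace.toDual ℝ E).symm φ
    have hd : ∀ v, ⟪d, v⟫ = φ v := fun v => InnerProductSpace.toDual_symm_apply
    have hr : r < ν * ‖d‖ := calc
      r < ⟪d, w⟫ := hd w ▸ hφw
      _ ≤ ‖d‖ * ‖w‖ := real_inner_le_norm d w
      _ ≤ ν * ‖d‖ := by
        rw [mul_comm]
        exact mul_le_mul_of_nonneg_right (mem_ball_zero_iff.1 hw).le (norm_nonneg d)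
    obtain ⟨c, hc, hrc⟩ := h d r hr
    exact (hφK c (subset_closure hc)).not_gt (hd c ▸ hrc)
  calc Metric.ball 0 ν = interior (Metric.ball 0 ν) := Metric.isOpen_ball.interior_eq.symm
    _ ⊆ interior (closure K) := interior_mono hcl
    _ = interior K := hK.interior_closure_eq_interior
    _ ⊆ K := interior_subset

end BallSubset

section Ray

variable {E : Type*} [NormedAddCommGroup E]

theorem _root_.DifferentiableAt.hasDerivAt_comp_ray [InnerProductSpace ℝ E] [CompleteSpace E]
    {h : E → ℝ} {x : E} (hd : DifferentiableAt ℝ h x) (u : E) :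
    HasDerivAt (fun τ : ℝ => h (x + τ • u)) ⟪gradient h x, u⟫ 0 := by
  have hray : HasDerivAt (fun τ : ℝ => x + τ • u) u 0 := by
    simpa using ((hasDerivAt_id (0 : ℝ)).smul_const u).const_add x
  have hd' : DifferentiableAt ℝ h (x + (0 : ℝ) • u) := by simpa using hd
  simpa [Function.comp_def, gradient, InnerProductSpace.toDual_symm_apply] using
    hd'.hasFDerivAt.comp_hasDerivAt (0 : ℝ) hray

theorem _root_.DifferentiableAt.exists_pos_lt_of_inner_gradient_neg [InnerProductSpace ℝ E]
    [CompleteSpace E] {h : E → ℝ} {x u : E} (hd : DifferentiableAt ℝ h x)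
    (hu : ⟪gradient h x, u⟫ < 0) : ∃ s > (0 : ℝ), h (x + s • u) < h x := by
  have hslope := (hasDerivAt_iff_tendsto_slope.1 (hd.hasDerivAt_comp_ray u)).mono_left
    (nhdsGT_le_nhdsNE 0)
  obtain ⟨s, hs, hspos⟩ := ((hslope.eventually_lt_const hu).and self_mem_nhdsWithin).exists
  refine ⟨s, hspos, ?_⟩
  rw [slope_def_field, div_neg_iff, sub_zero] at hs
  simpa using (hs.resolve_left fun h => lt_asymm h.2 hspos).1

variable {T : Type*} [TopologicalSpace T] [CompactSpace T] [NormedSpace ℝ E]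

theorem eventually_forall_nonpos_along_ray {g : T → E → ℝ}
    (hcont : Continuous fun q : T × E => g q.1 q.2) (hconv : ∀ t, ConvexOn ℝ univ (g t))
    {x u : E} (hx : ∀ t, g t x ≤ 0) (hu : ∀ t, g t x = 0 → ∃ s > (0 : ℝ), g t (x + s • u) < 0) :
    ∀ᶠ τ in 𝓝[>] (0 : ℝ), ∀ t, g t (x + τ • u) ≤ 0 := by
  have hray : ∀ t, Continuous fun τ : ℝ => g t (x + τ • u) := fun t =>
    hcont.comp <| continuous_const.prodMk <|
      continuous_const.add (continuous_id.smul continuous_const)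
  have hdesc : ∀ t, ∃ s > (0 : ℝ), g t (x + s • u) < 0 := by
    intro t
    rcases (hx t).lt_or_eq with hneg | hzero
    · have hlim : Tendsto (fun τ : ℝ => g t (x + τ • u)) (𝓝[>] 0) (𝓝 (g t x)) := by
        simpa using ((hray t).tendsto 0).mono_left nhdsWithin_le_nhds
      obtain ⟨s, hs, hspos⟩ := ((hlim.eventually_lt_const hneg).and self_mem_nhdsWithin).exists
      exact ⟨s, hspos, hs⟩
    · exact hu t hzero
  have hloc : ∀ t ∈ univ, ∀ᶠ z : ℝ × T in 𝓝 ((0 : ℝ), t), 0 < z.1 → g z.2 (x + z.1 • u) ≤ 0 := by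
    intro t _
    obtain ⟨s, hs, hneg⟩ := hdesc t
    have hnear : ∀ᶠ t' in 𝓝 t, g t' (x + s • u) < 0 :=
      (hcont.comp (continuous_id.prodMk continuous_const)).continuousAt.eventually_lt
        continuousAt_const hneg
    filter_upwards [(eventually_lt_nhds hs).prodMk_nhds hnear] with ⟨τ, t'⟩ ⟨hτs, ht'⟩ hτ
    have hseg := ((hconv t').convex_le 0).add_smul_mem (x := x) (y := s • u) ⟨trivial, hx t'⟩
      ⟨trivial, ht'.le⟩ (t := τ / s) ⟨by positivity, (div_le_one hs).2 hτs.le⟩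
    rw [smul_smul, div_mul_cancel₀ _ hs.ne'] at hseg
    exact hseg.2
  have hunif : ∀ᶠ τ in 𝓝 (0 : ℝ), ∀ t ∈ univ, 0 < τ → g t (x + τ • u) ≤ 0 :=
    isCompact_univ.eventually_forall_of_forall_eventually hloc
  filter_upwards [hunif.filter_mono nhdsWithin_le_nhds, self_mem_nhdsWithin] with τ hτ hτpos t
    using hτ t trivial hτpos

end Ray

section WeightedSums

variable {E : Type*} [AddCommGroup E] [Module ℝ E]

theorem _root_.Convex.exists_smul_add_smul_eq {D : Set E} (hD : Convex ℝ D) {z₁ z₂ : E}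
    (h₁ : z₁ ∈ D) (h₂ : z₂ ∈ D) {c₁ c₂ : ℝ} (hc₁ : 0 ≤ c₁) (hc₂ : 0 ≤ c₂) :
    ∃ z ∈ D, c₁ • z₁ + c₂ • z₂ = (c₁ + c₂) • z := by
  rcases (add_nonneg hc₁ hc₂).eq_or_lt with hc | hc
  · obtain ⟨rfl, rfl⟩ : c₁ = 0 ∧ c₂ = 0 := ⟨by linarith, by linarith⟩
    exact ⟨z₁, h₁, by simp⟩
  refine ⟨(c₁ / (c₁ + c₂)) • z₁ + (c₂ / (c₁ + c₂)) • z₂,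
    hD h₁ h₂ (by positivity) (by positivity) (by field_simp), ?_⟩
  rw [smul_add, smul_smul, smul_smul, mul_div_cancel₀ _ hc.ne', mul_div_cancel₀ _ hc.ne']

theorem exists_sum_smul_add_sum_smul_eq {ι : Type*} (s : Finset ι) {D : ι → Set E}
    (hD : ∀ i ∈ s, Convex ℝ (D i)) {β₁ β₂ : ι → ℝ} {z₁ z₂ : ι → E}
    (hβ₁ : ∀ i ∈ s, 0 ≤ β₁ i) (hβ₂ : ∀ i ∈ s, 0 ≤ β₂ i)
    (hz₁ : ∀ i ∈ s, z₁ i ∈ D i) (hz₂ : ∀ i ∈ s, z₂ i ∈ D i) :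
    ∃ z : ι → E, (∀ i ∈ s, z i ∈ D i) ∧
      ∑ i ∈ s, β₁ i • z₁ i + ∑ i ∈ s, β₂ i • z₂ i = ∑ i ∈ s, (β₁ i + β₂ i) • z i := by
  have hmerge : ∀ i, ∃ z, i ∈ s → z ∈ D i ∧ β₁ i • z₁ i + β₂ i • z₂ i = (β₁ i + β₂ i) • z := by
    intro i
    by_cases hi : i ∈ s
    · obtain ⟨z, hz, he⟩ := (hD i hi).exists_smul_add_smul_eq (hz₁ i hi) (hz₂ i hi)
        (hβ₁ i hi) (hβ₂ i hi)
      exact ⟨z, fun _ => ⟨hz, he⟩⟩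
    · exact ⟨0, fun h => absurd h hi⟩
  choose z hz using hmerge
  refine ⟨z, fun i hi => (hz i hi).1, ?_⟩
  rw [← Finset.sum_add_distrib]
  exact Finset.sum_congr rfl fun i hi => (hz i hi).2

theorem sum_ite_smul_ite {ι : Type*} [DecidableEq ι]
    {Ts s : Finset ι} (h : Ts ⊆ s) (c : ι → ℝ) (z z' : ι → E) :
    ∑ t ∈ s, (if t ∈ Ts then c t else 0) • (if t ∈ Ts then z t else z' t) =
      ∑ t ∈ Ts, c t • z t := by
  rw [← Finset.sum_subset h fun t _ ht => by simp [ht]]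
  exact Finset.sum_congr rfl fun t ht => by simp [ht]

end WeightedSums

section Subdifferential

variable {n : ℕ} {h : Eucl n → ℝ}

theorem convex_subdiff (h : Eucl n → ℝ) (x : Eucl n) : Convex ℝ (subdiff h x) := by
  intro ξ₁ h₁ ξ₂ h₂ a b ha hb hab y
  have e₁ := mul_le_mul_of_nonneg_left (h₁ y) ha
  have e₂ := mul_le_mul_of_nonneg_left (h₂ y) hb
  rw [inner_add_left, real_inner_smul_left, real_inner_smul_left]
  linear_combination e₁ + e₂ + (h y - h x) * hab

theorem exists_mem_subdiff_rightDirDeriv_le_inner (hh : ConvexOn ℝ univ h) (x u : Eucl n) :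
    ∃ ξ ∈ subdiff h x, rightDirDeriv h x u ≤ ⟪ξ, u⟫ := by
  obtain ⟨G, hGu, hGle⟩ := hh.exists_linearMap_le_rightDirDeriv x u
  set ξ := (InnerProductSpace.toDual ℝ (Eucl n)).symm (LinearMap.toContinuousLinearMap G)
  have hξ : ∀ v, ⟪ξ, v⟫ = G v := fun v => InnerProductSpace.toDual_symm_apply
  refine ⟨ξ, fun y => ?_, (hξ u).trans hGu |>.ge⟩
  have hy := (hGle (y - x)).trans (hh.rightDirDeriv_le_sub x (y - x))
  rw [add_sub_cancel] at hy
  rw [hξ]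
  linarith

theorem subdiff_nonempty (hh : ConvexOn ℝ univ h) (x : Eucl n) : (subdiff h x).Nonempty :=
  let ⟨ξ, hξ, _⟩ := exists_mem_subdiff_rightDirDeriv_le_inner hh x 0
  ⟨ξ, hξ⟩

theorem gradient_mem_subdiff (hh : ConvexOn ℝ univ h) {x : Eucl n}
    (hd : DifferentiableAt ℝ h x) : gradient h x ∈ subdiff h x := by
  intro y
  have hy := (hh.comp_ray x (y - x)).le_slope_of_hasDerivWithinAt_Ioi trivial trivial one_pos
    (hd.hasDerivAt_comp_ray (y - x)).hasDerivWithinAt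
  simp only [slope_def_field, zero_smul, add_zero, one_smul, add_sub_cancel, sub_zero,
    div_one] at hy
  linarith

theorem subdiffE_coe (h : Eucl n → ℝ) (x : Eucl n) :
    subdiffE (fun y => (h y : EReal)) x = subdiff h x := by
  ext ξ
  simp only [subdiffE, subdiff, mem_ofPred_eq, ← EReal.coe_add, EReal.coe_le_coe_iff]

theorem ConvexE.convexOn_univ (hh : ConvexE fun y => (h y : EReal)) : ConvexOn ℝ univ h := by
  refine ⟨convex_univ, fun x _ y _ a b ha hb hab => ?_⟩
  have hxy := hh x y a b ha hb hab
  rw [← EReal.coe_mul, ← EReal.coe_mul, ← EReal.coe_add, EReal.coe_le_coe_iff] at hxy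
  exact hxy

theorem gradient_mem_subdiffE_coe (hh : ConvexOn ℝ univ h) {x : Eucl n}
    (hd : DifferentiableAt ℝ h x) : gradient h x ∈ subdiffE (fun y => (h y : EReal)) x :=
  subdiffE_coe h x ▸ gradient_mem_subdiff hh hd

end Subdifferential

section KKT

variable {n p : ℕ} {T : Type*} {f : Fin p → Eucl n → ℝ} {g : T → Eucl n → EReal} {xh : Eucl n}

theorem feasSet_coe (gR : T → Eucl n → ℝ) :
    feasSet (fun t y => (gR t y : EReal)) = {x | ∀ t, gR t x ≤ 0} := by
  simp [feasSet]

theorem mem_activeIx_coe {gR : T → Eucl n → ℝ} {t : T} :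
    t ∈ activeIx (fun t y => (gR t y : EReal)) xh ↔ gR t xh = 0 := by
  simp [activeIx]

theorem kktPoint_add_sum (hne : ∀ j, (subdiff (f j) xh).Nonempty) {i : Fin p} {ξ : Eucl n}
    (hξ : ξ ∈ subdiff (f i) xh) {Ts : Finset T} {β : T → ℝ} {ζ : T → Eucl n}
    (hTs : ∀ t ∈ Ts, t ∈ activeIx g xh) (hβ : ∀ t ∈ Ts, 0 ≤ β t)
    (hζ : ∀ t ∈ Ts, ζ t ∈ subdiffE (g t) xh) : KKTPoint f g xh (ξ + ∑ t ∈ Ts, β t • ζ t) := by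
  classical
  refine ⟨Pi.single i 1, Ts, β, Function.update (fun j => (hne j).some) i ξ, ζ,
    fun j => ?_, by simp, hTs, hβ, fun j => ?_, hζ, ?_⟩
  · by_cases hj : j = i <;> simp [hj]
  · by_cases hj : j = i
    · subst hj; simpa using hξ
    · simpa [hj] using (hne j).some_mem
  · rw [Fintype.sum_eq_single i fun j hj => by simp [hj]]
    simp

theorem convex_setOf_kktPoint (hG : ∀ t ∈ activeIx g xh, Convex ℝ (subdiffE (g t) xh)) :
    Convex ℝ {w | KKTPoint f g xh w} := by
  classical
  rintro _ ⟨α₁, Ts₁, β₁, ξ₁, ζ₁, hα₁, hα₁1, hTs₁, hβ₁, hξ₁, hζ₁, rfl⟩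
    _ ⟨α₂, Ts₂, β₂, ξ₂, ζ₂, hα₂, hα₂1, hTs₂, hβ₂, hξ₂, hζ₂, rfl⟩ a b ha hb hab
  obtain ⟨ξ, hξ, hξeq⟩ := exists_sum_smul_add_sum_smul_eq Finset.univ
    (fun i _ => convex_subdiff (f i) xh) (β₁ := fun i => a * α₁ i) (β₂ := fun i => b * α₂ i)
    (fun i _ => mul_nonneg ha (hα₁ i)) (fun i _ => mul_nonneg hb (hα₂ i))
    (fun i _ => hξ₁ i) (fun i _ => hξ₂ i)
  -- both constraint sums are extended by zero coefficients to the common index set `Ts₁ ∪ Ts₂`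
  set s := Ts₁ ∪ Ts₂
  have hact : ∀ t ∈ s, t ∈ activeIx g xh := by
    intro t ht
    rcases Finset.mem_union.1 ht with h | h
    exacts [hTs₁ t h, hTs₂ t h]
  have hβ₁' : ∀ t ∈ s, 0 ≤ if t ∈ Ts₁ then a * β₁ t else 0 := fun t _ => by
    split_ifs with h
    exacts [mul_nonneg ha (hβ₁ t h), le_rfl]
  have hβ₂' : ∀ t ∈ s, 0 ≤ if t ∈ Ts₂ then b * β₂ t else 0 := fun t _ => by
    split_ifs with h
    exacts [mul_nonneg hb (hβ₂ t h), le_rfl]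
  have hζ₁' : ∀ t ∈ s, (if t ∈ Ts₁ then ζ₁ t else ζ₂ t) ∈ subdiffE (g t) xh := fun t ht => by
    split_ifs with h
    exacts [hζ₁ t h, hζ₂ t ((Finset.mem_union.1 ht).resolve_left h)]
  have hζ₂' : ∀ t ∈ s, (if t ∈ Ts₂ then ζ₂ t else ζ₁ t) ∈ subdiffE (g t) xh := fun t ht => by
    split_ifs with h
    exacts [hζ₂ t h, hζ₁ t ((Finset.mem_union.1 ht).resolve_right h)]
  obtain ⟨ζ, hζ, hζeq⟩ := exists_sum_smul_add_sum_smul_eq s (fun t ht => hG t (hact t ht))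
    hβ₁' hβ₂' hζ₁' hζ₂'
  refine ⟨fun i => a * α₁ i + b * α₂ i, s, _, ξ, ζ,
    fun i => add_nonneg (mul_nonneg ha (hα₁ i)) (mul_nonneg hb (hα₂ i)), ?_, hact,
    fun t ht => add_nonneg (hβ₁' t ht) (hβ₂' t ht), fun i => hξ i (Finset.mem_univ i), hζ, ?_⟩
  · rw [Finset.sum_add_distrib, ← Finset.mul_sum, ← Finset.mul_sum, hα₁1, hα₂1, mul_one,
      mul_one, hab]
  · rw [← hξeq, ← hζeq, sum_ite_smul_ite Finset.subset_union_left,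
      sum_ite_smul_ite Finset.subset_union_right]
    simp only [mul_smul, ← Finset.smul_sum]
    module

end KKT

theorem nonpos_of_forall_add_mul_le {a b r : ℝ} (h : ∀ β ≥ 0, a + β * b ≤ r) : b ≤ 0 := by
  by_contra! hb
  have hβ := h ((|r - a| + 1) / b) (by positivity)
  rw [div_mul_cancel₀ _ hb.ne'] at hβ
  linarith [le_abs_self (r - a)]

section Isolated

variable {n p : ℕ} {T : Type*} {f : Fin p → Eucl n → ℝ} {xh : Eucl n} {ν : ℝ}

theorem IsolatedEff.exists_mem_subdiff_le_inner {S : Set (Eucl n)}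
    (hiso : IsolatedEff f S xh ν) (hf : ∀ i, ConvexOn ℝ univ (f i)) {u : Eucl n}
    (hray : ∀ᶠ τ in 𝓝[>] (0 : ℝ), xh + τ • u ∈ S) :
    ∃ i, ∃ ξ ∈ subdiff (f i) xh, ν * ‖u‖ ≤ ⟪ξ, u⟫ := by
  suffices h : ∃ i, ν * ‖u‖ ≤ rightDirDeriv (f i) xh u by
    obtain ⟨i, hi⟩ := h
    obtain ⟨ξ, hξ, hle⟩ := exists_mem_subdiff_rightDirDeriv_le_inner (hf i) xh u
    exact ⟨i, ξ, hξ, hi.trans hle⟩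
  by_contra! h
  have hslope : ∀ᶠ τ in 𝓝[>] (0 : ℝ), ∀ i, (f i (xh + τ • u) - f i xh) / τ < ν * ‖u‖ :=
    eventually_all.2 fun i => ((hf i).tendsto_slope_rightDirDeriv xh u).eventually_lt_const (h i)
  obtain ⟨τ, ⟨hτS, hτ⟩, hτpos⟩ := ((hray.and hslope).and self_mem_nhdsWithin).exists
  obtain ⟨i, hi⟩ := hiso _ hτS
  have hτi := (div_lt_iff₀ hτpos).1 (hτ i)
  rw [add_sub_cancel_left, norm_smul, Real.norm_of_nonneg hτpos.le] at hi
  linarith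

variable [TopologicalSpace T] [CompactSpace T] {gR : T → Eucl n → ℝ}

theorem IsolatedEff.mul_norm_le_of_inner_le (hiso : IsolatedEff f {x | ∀ t, gR t x ≤ 0} xh ν)
    (hν : 0 ≤ ν) (hf : ∀ i, ConvexOn ℝ univ (f i)) (hg : ∀ t, ConvexOn ℝ univ (gR t))
    (hcont : Continuous fun q : T × Eucl n => gR q.1 q.2) (hxh : ∀ t, gR t xh ≤ 0)
    (hdiff : ∀ t, DifferentiableAt ℝ (gR t) xh) {d₀ d : Eucl n} {r : ℝ}
    (hd₀ : ∀ t, gR t xh = 0 → ⟪gradient (gR t) xh, d₀⟫ < 0)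
    (hdG : ∀ t, gR t xh = 0 → ⟪gradient (gR t) xh, d⟫ ≤ 0)
    (hdF : ∀ i, ∀ ξ ∈ subdiff (f i) xh, ⟪ξ, d⟫ ≤ r) : ν * ‖d‖ ≤ r := by
  by_contra! hr
  obtain ⟨K, hK⟩ := Finite.exists_le fun i => f i (xh + d₀) - f i xh
  obtain ⟨ε, hε, hεK⟩ := exists_pos_mul_lt (sub_pos.2 hr) (K + ν * ‖d₀‖)
  set u := d + ε • d₀
  have hdesc : ∀ t, gR t xh = 0 → ∃ s > (0 : ℝ), gR t (xh + s • u) < 0 := by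
    intro t ht
    have hu : ⟪gradient (gR t) xh, u⟫ < 0 := by
      rw [inner_add_right, real_inner_smul_right]
      linarith [hdG t ht, mul_neg_of_pos_of_neg hε (hd₀ t ht)]
    simpa [ht] using (hdiff t).exists_pos_lt_of_inner_gradient_neg hu
  obtain ⟨i, ξ, hξ, hle⟩ :=
    hiso.exists_mem_subdiff_le_inner hf (eventually_forall_nonpos_along_ray hcont hg hxh hdesc)
  have hξd₀ : ⟪ξ, d₀⟫ ≤ K := by
    have h := hξ (xh + d₀)
    rw [add_sub_cancel_left] at h
    linarith [hK i]
  have hξu : ⟪ξ, u⟫ ≤ r + ε * K := by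
    rw [inner_add_right, real_inner_smul_right]
    linarith [hdF i ξ hξ, mul_le_mul_of_nonneg_left hξd₀ hε.le]
  have hnorm : ‖d‖ ≤ ‖u‖ + ε * ‖d₀‖ := calc
    ‖d‖ = ‖u - ε • d₀‖ := by simp [u]
    _ ≤ ‖u‖ + ‖ε • d₀‖ := norm_sub_le _ _
    _ = ‖u‖ + ε * ‖d₀‖ := by rw [norm_smul, Real.norm_of_nonneg hε.le]
  linarith [mul_le_mul_of_nonneg_left hnorm hν]

theorem IsolatedEff.exists_kktPoint_lt_inner (hiso : IsolatedEff f {x | ∀ t, gR t x ≤ 0} xh ν)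
    (hν : 0 ≤ ν) (hf : ∀ i, ConvexOn ℝ univ (f i)) (hg : ∀ t, ConvexOn ℝ univ (gR t))
    (hcont : Continuous fun q : T × Eucl n => gR q.1 q.2) (hxh : ∀ t, gR t xh ≤ 0)
    (hdiff : ∀ t, DifferentiableAt ℝ (gR t) xh) {d₀ : Eucl n}
    (hd₀ : ∀ t, gR t xh = 0 → ⟪gradient (gR t) xh, d₀⟫ < 0) (d : Eucl n) (r : ℝ)
    (hr : r < ν * ‖d‖) :
    ∃ c ∈ {w | KKTPoint f (fun t y => (gR t y : EReal)) xh w}, r < ⟪d, c⟫ := by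
  by_contra! h
  have hne : ∀ j, (subdiff (f j) xh).Nonempty := fun j => subdiff_nonempty (hf j) xh
  have hdF : ∀ i, ∀ ξ ∈ subdiff (f i) xh, ⟪ξ, d⟫ ≤ r := fun i ξ hξ => by
    simpa [real_inner_comm] using h _ (kktPoint_add_sum hne hξ (Ts := ∅) (β := 0) (ζ := 0)
      (by simp) (by simp) (by simp))
  have hdG : ∀ t, gR t xh = 0 → ⟪gradient (gR t) xh, d⟫ ≤ 0 := by
    intro t ht
    obtain ⟨i, -⟩ := hiso xh hxh
    obtain ⟨ξ, hξ⟩ := hne i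
    -- the objective point `ξ` can be moved arbitrarily far along the constraint gradient
    refine nonpos_of_forall_add_mul_le (a := ⟪d, ξ⟫) (r := r) fun β hβ => ?_
    simpa [inner_add_right, real_inner_smul_right, real_inner_comm] using
      h _ (kktPoint_add_sum hne hξ (Ts := {t}) (β := fun _ => β)
        (ζ := fun _ => gradient (gR t) xh) (by simpa using mem_activeIx_coe.2 ht)
        (by simpa using hβ) (by simpa using gradient_mem_subdiffE_coe (hg t) (hdiff t)))
  exact hr.not_ge (hiso.mul_norm_le_of_inner_le hν hf hg hcont hxh hdiff hd₀ hdG hdF)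

end Isolated

variable {n p : ℕ} {T : Type*}

theorem stmt12_general
    [TopologicalSpace T] [CompactSpace T]
    (f : Fin p → Eucl n → ℝ) (g : T → Eucl n → EReal)
    (hf : ∀ i, ConvexOn ℝ Set.univ (f i))
    (hgconv : ∀ t, ConvexE (g t))
    (xh : Eucl n) (hxS : xh ∈ feasSet g)
    (gR : T → Eucl n → ℝ) (hgR : ∀ t x, g t x = ((gR t x : ℝ) : EReal))
    (hcont : Continuous fun q : T × Eucl n => gR q.1 q.2)
    (hsmooth : ∀ t, ∃ U ∈ 𝓝 xh, ContDiffOn ℝ 1 (gR t) U)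
    (hiso : ∃ ν : ℝ, 0 < ν ∧ IsolatedEff f (feasSet g) xh ν)
    (hmfcq : MFCQ g xh) :
    ∃ ν : ℝ, 0 < ν ∧ PerturbedKKT f g xh ν := by
  obtain rfl : g = fun t y => (gR t y : EReal) := funext fun t => funext (hgR t)
  have hg : ∀ t, ConvexOn ℝ univ (gR t) := fun t => (hgconv t).convexOn_univ
  have hdiff : ∀ t, DifferentiableAt ℝ (gR t) xh := fun t =>
    let ⟨_, hU, hC⟩ := hsmooth t
    (hC.contDiffAt hU).differentiableAt one_ne_zero
  obtain ⟨ν, hν, hiso⟩ := hiso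
  obtain ⟨-, d₀, hd₀⟩ := hmfcq
  rw [feasSet_coe] at hxS hiso
  have hd₀' : ∀ t, gR t xh = 0 → ⟪gradient (gR t) xh, d₀⟫ < 0 := fun t ht =>
    hd₀ _ (mem_biUnion (mem_activeIx_coe.2 ht) (gradient_mem_subdiffE_coe (hg t) (hdiff t)))
  have hball : Metric.ball 0 ν ⊆ {w | KKTPoint f (fun t y => (gR t y : EReal)) xh w} :=
    (convex_setOf_kktPoint fun t _ => subdiffE_coe (gR t) xh ▸ convex_subdiff (gR t) xh)
      |>.ball_subset_of_forall_exists_inner_gt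
        (hiso.exists_kktPoint_lt_inner hν.le hf hg hcont hxS hdiff hd₀')
  exact ⟨ν / 2, half_pos hν, fun w hw => hball (mem_ball_zero_iff.2 (by linarith))⟩

/-- If `(P)` is continuous, `x̂ ∈ S` is an isolated efficient solution of
`(P)`, all constraints are continuously differentiable around `x̂`, and MFCQ holds at `x̂`,
then the perturbed KKT condition holds at `x̂`. -/
theorem stmt12
    [TopologicalSpace T] [CompactSpace T] [T2Space T]
    (hn : 1 ≤ n) (hp : 1 ≤ p)
    (f : Fin p → Eucl n → ℝ) (g : T → Eucl n → EReal)
    (hf : ∀ i, ConvexOn ℝ Set.univ (f i))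
    (hgconv : ∀ t, ConvexE (g t))
    (hgproper : ∀ t, ProperE (g t))
    (hglsc : ∀ t, LowerSemicontinuous (g t))
    (xh : Eucl n) (hxS : xh ∈ feasSet g)
    (gR : T → Eucl n → ℝ) (hgR : ∀ t x, g t x = ((gR t x : ℝ) : EReal))
    (hcont : Continuous fun q : T × Eucl n => gR q.1 q.2)
    (hsmooth : ∀ t, ∃ U ∈ 𝓝 xh, ContDiffOn ℝ 1 (gR t) U)
    (hiso : ∃ ν : ℝ, 0 < ν ∧ IsolatedEff f (feasSet g) xh ν)
    (hmfcq : MFCQ g xh) :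
    ∃ ν : ℝ, 0 < ν ∧ PerturbedKKT f g xh ν :=
  stmt12_general f g hf hgconv xh hxS gR hgR hcont hsmooth hiso hmfcq

end MOSIP
end
end

section
/- If x̂ ∈ S satisfies G(x̂) ≠ ∅, then the local Farkas–Minkowski constraint qualification (LFMCQ) holds at x̂ if and only if both the Abadie constraint qualification (ACQ) and the closed cone constraint qualification (CCCQ) hold at x̂. -/
open Set Filter Topology
open scoped RealInnerProductSpace Pointwise

noncomputable section

namespace MOSIP

variable {n : ℕ} {T : Type*} {p : ℕ}

variable {n p : ℕ} {T : Type*}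

/-! The contingent cone `C` of the convex feasible set is a closed convex cone (the closure of the
cone of feasible rays from `x̂`), so the bipolar theorem gives `N⁰ = C⁰⁰ = C`; likewise
`(cone G)⁰⁰ = cone G` as soon as `cone G` is closed, while `(cone G)⁰ = G⁰` always. Hence LFMCQ
`N = cone G` polarizes to ACQ `G⁰ = C` and makes `cone G` closed, being a polar. Conversely ACQ
and CCCQ give `N = C⁰ ⊆ G⁰⁰ = cone G`, and `cone G ⊆ N` always holds because every
`ξ ∈ ∂g_t(x̂)` with `t` active satisfies `⟪ξ, y - x̂⟫ ≤ g_t(y) ≤ 0` on `S`. -/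

lemma negPolar_eq_innerDual_neg (M : Set (Eucl n)) :
    negPolar M = ProperCone.innerDual (-M) := by
  ext d
  simp [negPolar, inner_neg_left]

lemma negPolar_negPolar_eq_innerDual_innerDual (M : Set (Eucl n)) :
    negPolar (negPolar M) = ProperCone.innerDual (ProperCone.innerDual M : Set (Eucl n)) := by
  ext e
  simp only [negPolar, ProperCone.mem_innerDual, SetLike.mem_coe]
  refine ⟨fun h y hy => ?_, fun h d hd => ?_⟩
  · simpa [inner_neg_left] using h (-y) fun ξ hξ => by simpa [inner_neg_right] using hy hξ
  · simpa [inner_neg_left] using h (x := -d) fun ξ hξ => by simpa [inner_neg_right] using hd ξ hξ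

lemma negPolar_negPolar_properCone (C : ProperCone ℝ (Eucl n)) :
    negPolar (negPolar (C : Set (Eucl n))) = C := by
  rw [negPolar_negPolar_eq_innerDual_innerDual, ProperCone.innerDual_innerDual]

lemma negPolar_anti {A B : Set (Eucl n)} (h : A ⊆ B) : negPolar B ⊆ negPolar A :=
  fun _ hd ξ hξ => hd ξ (h hξ)

lemma subset_negPolar_comm {A B : Set (Eucl n)} : A ⊆ negPolar B ↔ B ⊆ negPolar A :=
  ⟨fun h b hb a ha => real_inner_comm a b ▸ h ha b hb,
    fun h a ha b hb => real_inner_comm b a ▸ h hb a ha⟩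

lemma isClosed_negPolar (M : Set (Eucl n)) : IsClosed (negPolar M) := by
  rw [negPolar_eq_innerDual_neg]
  exact (ProperCone.innerDual _).isClosed

lemma coneHull_eq_hull (M : Set (Eucl n)) : coneHull M = PointedCone.hull ℝ M := by
  ext x
  refine ⟨?_, fun hx => ?_⟩
  · rintro ⟨s, c, hs, hc, rfl⟩
    exact Submodule.sum_mem _ fun v hv =>
      PointedCone.smul_mem _ (hc v hv) (PointedCone.subset_hull (hs hv))
  · obtain ⟨c, s, hs, -, rfl⟩ := Submodule.mem_span_iff_exists_finset_subset.1 hx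
    exact ⟨s, fun v => c v, hs, fun v _ => (c v).2, rfl⟩

lemma coneHull_subset_negPolar {M P : Set (Eucl n)} (h : M ⊆ negPolar P) :
    coneHull M ⊆ negPolar P := by
  rw [coneHull_eq_hull, negPolar_eq_innerDual_neg] at *
  exact Submodule.span_le.2 h

lemma negPolar_coneHull (M : Set (Eucl n)) : negPolar (coneHull M) = negPolar M := by
  refine (negPolar_anti fun v hv => ?_).antisymm ?_
  · rw [coneHull_eq_hull]
    exact PointedCone.subset_hull hv
  · rw [← subset_negPolar_comm]
    exact coneHull_subset_negPolar (subset_negPolar_comm.1 subset_rfl)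

lemma negPolar_negPolar_of_isClosed_coneHull {M : Set (Eucl n)} (h : IsClosed (coneHull M)) :
    negPolar (negPolar M) = coneHull M := by
  rw [← negPolar_coneHull M, coneHull_eq_hull] at *
  exact negPolar_negPolar_properCone ⟨_, h⟩

section ContingentCone

variable {S : Set (Eucl n)} {x : Eucl n}

lemma contingentCone_eq_closure_hull (hS : Convex ℝ S) (hx : x ∈ S) :
    contingentCone S x = closure (ConvexCone.hull ℝ (-x +ᵥ S)) := by
  ext v
  simp only [ConvexCone.coe_hull_of_convex (hS.vadd (-x)), Set.mem_smul_set, Set.mem_vadd_set,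
    vadd_eq_add, exists_exists_and_eq_and]
  constructor
  · rintro ⟨τ, w, hτ, -, hw, hmem⟩
    refine mem_closure_of_tendsto hw (Eventually.of_forall fun r => ?_)
    refine ⟨(τ r)⁻¹, inv_pos.2 (hτ r), _, hmem r, ?_⟩
    rw [neg_add_cancel_left, smul_smul, inv_mul_cancel₀ (hτ r).ne', one_smul]
  · intro hv
    obtain ⟨u, hu, huv⟩ := mem_closure_iff_seq_limit.1 hv
    choose c hc y hy hyu using hu
    -- With `τ k = (k + 1 + c k)⁻¹` we get `τ k → 0` and `τ k * c k ≤ 1`, so the point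
    -- `x + τ k • u k` lies on the segment from `x` to `y k`.
    have hc' : ∀ k : ℕ, 0 < (k + 1 + c k : ℝ) := fun k => by linarith [hc k]
    refine ⟨fun k => (k + 1 + c k)⁻¹, u, fun k => inv_pos.2 (hc' k), ?_, huv, fun k => ?_⟩
    · refine squeeze_zero (fun k => (inv_pos.2 (hc' k)).le) (fun k => ?_)
        tendsto_one_div_add_atTop_nhds_zero_nat
      rw [one_div]
      exact inv_anti₀ (by positivity) (by linarith [hc k])
    · have hstep : (k + 1 + c k : ℝ)⁻¹ * c k ∈ Icc (0 : ℝ) 1 :=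
        ⟨by have := hc' k; have := hc k; positivity,
          inv_mul_le_one_of_le₀ (by linarith) (hc' k).le⟩
      convert hS.add_smul_sub_mem hx (hy k) hstep using 1
      rw [← hyu, smul_smul, neg_add_eq_sub]

lemma negPolar_normalCone (hS : Convex ℝ S) (hx : x ∈ S) :
    negPolar (normalCone S x) = contingentCone S x := by
  have hpointed : (ConvexCone.hull ℝ (-x +ᵥ S)).Pointed :=
    ConvexCone.subset_hull ⟨x, hx, neg_add_cancel x⟩
  rw [normalCone, contingentCone_eq_closure_hull hS hx]
  exact negPolar_negPolar_properCone
    (Submodule.closure ((ConvexCone.hull ℝ (-x +ᵥ S)).toPointedCone hpointed))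

lemma mem_normalCone_of_inner_sub_nonpos {ξ : Eucl n} (h : ∀ y ∈ S, ⟪ξ, y - x⟫ ≤ 0) :
    ξ ∈ normalCone S x := by
  rintro v ⟨τ, w, hτ, -, hw, hmem⟩
  have hw_nonpos : ∀ r, ⟪ξ, w r⟫ ≤ 0 := fun r => by
    have := h _ (hmem r)
    rw [add_sub_cancel_left, real_inner_smul_right] at this
    exact nonpos_of_mul_nonpos_right this (hτ r)
  rw [real_inner_comm]
  exact le_of_tendsto (tendsto_const_nhds.inner hw) (Eventually.of_forall hw_nonpos)

end ContingentCone

lemma convex_feasSet {g : T → Eucl n → EReal} (hg : ∀ t, ConvexE (g t)) :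
    Convex ℝ (feasSet g) := by
  intro y hy z hz a b ha hb hab t
  calc g t (a • y + b • z) ≤ (a : EReal) * g t y + (b : EReal) * g t z := hg t y z a b ha hb hab
    _ ≤ 0 := add_nonpos (mul_nonpos_of_nonneg_of_nonpos (by exact_mod_cast ha) (hy t))
        (mul_nonpos_of_nonneg_of_nonpos (by exact_mod_cast hb) (hz t))

lemma GSet_subset_normalCone (g : T → Eucl n → EReal) (x : Eucl n) :
    GSet g x ⊆ normalCone (feasSet g) x := by
  simp only [GSet, Set.iUnion_subset_iff]
  intro t (ht : g t x = 0) ξ hξ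
  refine mem_normalCone_of_inner_sub_nonpos fun y hy => ?_
  have := (hξ y).trans (hy t)
  rwa [ht, zero_add, EReal.coe_nonpos] at this

theorem stmt18_general
    (g : T → Eucl n → EReal)
    (hgconv : ∀ t, ConvexE (g t))
    (xh : Eucl n) (hxS : xh ∈ feasSet g)
    (hG : (GSet g xh).Nonempty) :
    LFMCQ g xh ↔ (ACQ g xh ∧ CCCQ g xh) := by
  have hC : negPolar (normalCone (feasSet g) xh) = contingentCone (feasSet g) xh :=
    negPolar_normalCone (convex_feasSet hgconv) hxS
  have hKN : coneHull (GSet g xh) ⊆ normalCone (feasSet g) xh :=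
    coneHull_subset_negPolar (GSet_subset_normalCone g xh)
  refine ⟨fun hLFM => ⟨⟨hG, ?_⟩, ?_⟩, fun ⟨⟨_, hACQ⟩, hCCC⟩ => hKN.antisymm' ?_⟩
  · rw [← negPolar_coneHull, ← hLFM, hC]
  · rw [CCCQ, ← hLFM]
    exact isClosed_negPolar _
  · calc normalCone (feasSet g) xh ⊆ negPolar (negPolar (GSet g xh)) := negPolar_anti hACQ
      _ = coneHull (GSet g xh) := negPolar_negPolar_of_isClosed_coneHull hCCC

/-- If `x̂ ∈ S` satisfies `G(x̂) ≠ ∅`, then LFMCQ holds at `x̂` if and only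
if both ACQ and CCCQ hold at `x̂`. -/
theorem stmt18
    (hn : 1 ≤ n) (hp : 1 ≤ p)
    (f : Fin p → Eucl n → ℝ) (g : T → Eucl n → EReal)
    (hf : ∀ i, ConvexOn ℝ Set.univ (f i))
    (hgconv : ∀ t, ConvexE (g t))
    (hgproper : ∀ t, ProperE (g t))
    (hglsc : ∀ t, LowerSemicontinuous (g t))
    (xh : Eucl n) (hxS : xh ∈ feasSet g)
    (hG : (GSet g xh).Nonempty) :
    LFMCQ g xh ↔ (ACQ g xh ∧ CCCQ g xh) :=
  stmt18_general g hgconv xh hxS hG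

end MOSIP
end
end
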